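/- Let Γ(R) be the zero-divisor graph of R = 𝔽_p[x]/(x^{2b+1}) with b ≥ 1. The clique number of Γ(R) equals p^b. -/

import Mathlib

/-!
For nonzero `f, g` in `𝔽_p[x]/(x^(2b+1))`, `f * g = 0` iff `mindeg f + mindeg g ≥ 2b+1`.
Hence two vertices of minimal degree `≤ b` are never adjacent, so all but at most one vertex of
a clique lie in the annihilator of `x ^ b`, the elements of minimal degree `≥ b+1` together
with `0`; it has `p ^ b` elements and `0` is not a vertex. Conversely the nonzero elements of
this annihilator together with `x ^ b` are pairwise adjacent.
-/

open Polynomial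

noncomputable section

/-- The truncated polynomial ring `𝔽_p[x]/(x^c)`. -/
abbrev TPR (p c : ℕ) : Type := AdjoinRoot (X ^ c : (ZMod p)[X])

instance (p c : ℕ) [Fact p.Prime] : Finite (TPR p c) := by
  have hb : PowerBasis (ZMod p) (TPR p c) :=
    AdjoinRoot.powerBasis (pow_ne_zero c Polynomial.X_ne_zero)
  have : Module.Finite (ZMod p) (TPR p c) := Module.Finite.of_basis hb.basis
  exact Module.finite_of_finite (ZMod p)

/-- The canonical representative (the unique representative of degree `< c`)
of an element of `𝔽_p[x]/(x^c)`. -/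
def canon {p c : ℕ} (f : TPR p c) : (ZMod p)[X] :=
  Function.surjInv (AdjoinRoot.mk_surjective (g := (X ^ c : (ZMod p)[X]))) f %ₘ X ^ c

/-- The minimal degree: the least exponent with nonzero coefficient in the
canonical representative. -/
def mindeg {p c : ℕ} (f : TPR p c) : ℕ := (canon f).natTrailingDegree

/-- The set of nonzero zero-divisors of `𝔽_p[x]/(x^c)`. -/
def zd (p c : ℕ) : Set (TPR p c) := {f | f ≠ 0 ∧ ∃ g, g ≠ 0 ∧ f * g = 0}

/-- The zero-divisor graph of `𝔽_p[x]/(x^c)`: vertices are the nonzero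
zero-divisors, and `f ~ g` iff `f ≠ g` and `f * g = 0`. -/
def zdGraph (p c : ℕ) : SimpleGraph (zd p c) where
  Adj a b := a ≠ b ∧ (a : TPR p c) * (b : TPR p c) = 0
  symm := ⟨fun a b h => ⟨h.1.symm, by rw [mul_comm]; exact h.2⟩⟩
  loopless := ⟨fun a h => h.1 rfl⟩

theorem Polynomial.X_pow_dvd_iff_le_natTrailingDegree {R : Type*} [Semiring R] {q : R[X]}
    (hq : q ≠ 0) {n : ℕ} : X ^ n ∣ q ↔ n ≤ q.natTrailingDegree := by
  rw [X_pow_dvd_iff]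
  exact ⟨le_natTrailingDegree hq,
    fun h _ hd => coeff_eq_zero_of_lt_natTrailingDegree (hd.trans_le h)⟩

theorem Polynomial.degree_X_pow_mul_lt_iff {R : Type*} [Semiring R] [Nontrivial R] {q : R[X]}
    {m n : ℕ} : (X ^ m * q).degree < ↑(m + n) ↔ q.degree < n := by
  rw [X_pow_mul, degree_mul_X_pow, Nat.cast_add, add_comm (m : WithBot ℕ)]
  exact WithBot.add_lt_add_iff_right WithBot.coe_ne_bot

theorem SimpleGraph.card_le_cliqueNum_of_pairwise_adj {α β : Type*} [Finite α] [Finite β]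
    {G : SimpleGraph α} {f : β → α} (hf : Pairwise fun i j => G.Adj (f i) (f j)) :
    Nat.card β ≤ G.cliqueNum := by
  classical
  have := Fintype.ofFinite β
  have hinj : Function.Injective f := fun i j hij => by_contra fun hne => (hf hne).ne hij
  have hclique : G.IsClique (Finset.univ.image f : Set α) := by
    rw [Finset.coe_image, Finset.coe_univ, Set.image_univ]
    rintro _ ⟨i, rfl⟩ _ ⟨j, rfl⟩ hne
    exact hf fun hij => hne (congrArg f hij)
  calc Nat.card β = (Finset.univ.image f).card := by
        rw [Finset.card_image_of_injective _ hinj, Finset.card_univ, Nat.card_eq_fintype_card]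
    _ ≤ G.cliqueNum := hclique.card_le_cliqueNum

namespace TPR

variable {p c : ℕ}

def annRootPow (p c k : ℕ) : Set (TPR p c) :=
  {f | f * AdjoinRoot.root (X ^ c : (ZMod p)[X]) ^ k = 0}

theorem canon_eq_modByMonicHom (f : TPR p c) :
    canon f = AdjoinRoot.modByMonicHom (monic_X_pow c) f := by
  conv_rhs => rw [← Function.surjInv_eq (AdjoinRoot.mk_surjective (g := (X ^ c : (ZMod p)[X]))) f]
  rw [AdjoinRoot.modByMonicHom_mk]
  rfl

theorem mk_canon (f : TPR p c) : AdjoinRoot.mk (X ^ c) (canon f) = f := by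
  rw [canon_eq_modByMonicHom]
  exact AdjoinRoot.mk_leftInverse _ f

theorem canon_eq_zero_iff {f : TPR p c} : canon f = 0 ↔ f = 0 := by
  refine ⟨fun h => ?_, fun h => ?_⟩
  · rw [← mk_canon f, h, map_zero]
  · rw [h, canon_eq_modByMonicHom, map_zero]

theorem X_pow_dvd_canon_iff {f : TPR p c} (hf : f ≠ 0) {n : ℕ} :
    X ^ n ∣ canon f ↔ n ≤ mindeg f :=
  X_pow_dvd_iff_le_natTrailingDegree (canon_eq_zero_iff.not.2 hf)

theorem root_pow_eq_mk (k : ℕ) :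
    (AdjoinRoot.root (X ^ c : (ZMod p)[X])) ^ k = AdjoinRoot.mk (X ^ c) (X ^ k) := by
  rw [map_pow, AdjoinRoot.mk_X]

variable [Fact p.Prime]

theorem degree_canon_lt (f : TPR p c) : (canon f).degree < c := by
  rw [← degree_X_pow (R := ZMod p)]
  exact degree_modByMonic_lt _ (monic_X_pow (R := ZMod p) c)

theorem canon_mk {q : (ZMod p)[X]} (hq : q.degree < c) :
    canon (AdjoinRoot.mk (X ^ c) q) = q := by
  rwa [canon_eq_modByMonicHom, AdjoinRoot.modByMonicHom_mk,
    modByMonic_eq_self_iff (monic_X_pow c), degree_X_pow]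

theorem root_pow_ne_zero {k : ℕ} (hk : k < c) :
    (AdjoinRoot.root (X ^ c : (ZMod p)[X])) ^ k ≠ 0 := by
  rw [root_pow_eq_mk]
  exact AdjoinRoot.mk_ne_zero_of_degree_lt (monic_X_pow c) (pow_ne_zero _ X_ne_zero)
    (by simpa using hk)

theorem mul_eq_zero_iff_le_mindeg_add {f g : TPR p c} (hf : f ≠ 0) (hg : g ≠ 0) :
    f * g = 0 ↔ c ≤ mindeg f + mindeg g := by
  have hf' : canon f ≠ 0 := canon_eq_zero_iff.not.2 hf
  have hg' : canon g ≠ 0 := canon_eq_zero_iff.not.2 hg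
  have hfg : f * g = AdjoinRoot.mk (X ^ c) (canon f * canon g) := by
    rw [map_mul, mk_canon, mk_canon]
  rw [hfg, AdjoinRoot.mk_eq_zero, X_pow_dvd_iff_le_natTrailingDegree (mul_ne_zero hf' hg'),
    natTrailingDegree_mul hf' hg']
  rfl

theorem mem_annRootPow_iff {f : TPR p c} {k : ℕ} (hk : k ≤ c) :
    f ∈ annRootPow p c k ↔ X ^ (c - k) ∣ canon f := by
  have hf : f * AdjoinRoot.root (X ^ c) ^ k = AdjoinRoot.mk (X ^ c) (canon f * X ^ k) := by
    rw [map_mul, mk_canon, root_pow_eq_mk]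
  change f * _ = 0 ↔ _
  rw [hf, AdjoinRoot.mk_eq_zero, ← pow_sub_mul_pow X hk,
    mul_dvd_mul_iff_right (pow_ne_zero _ X_ne_zero)]

theorem mem_annRootPow_iff_le_mindeg {f : TPR p c} (hf : f ≠ 0) {k : ℕ} (hk : k ≤ c) :
    f ∈ annRootPow p c k ↔ c - k ≤ mindeg f := by
  rw [mem_annRootPow_iff hk, X_pow_dvd_canon_iff hf]

theorem card_annRootPow {k : ℕ} (hk : k ≤ c) : Nat.card (annRootPow p c k) = p ^ k := by
  have hdeg : ∀ {q : (ZMod p)[X]}, q ∈ degreeLT (ZMod p) k →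
      (X ^ (c - k) * q).degree < (c : WithBot ℕ) := by
    intro q hq
    simpa only [Nat.sub_add_cancel hk] using
      (degree_X_pow_mul_lt_iff (m := c - k)).2 (mem_degreeLT.1 hq)
  let φ : degreeLT (ZMod p) k → annRootPow p c k := fun q =>
    ⟨AdjoinRoot.mk (X ^ c) (X ^ (c - k) * (q : (ZMod p)[X])), by
      rw [mem_annRootPow_iff hk, canon_mk (hdeg q.2)]
      exact dvd_mul_right _ _⟩
  have hφ : Function.Bijective φ := by
    refine ⟨fun q q' h => ?_, fun f => ?_⟩
    · have h' := congrArg (fun f => canon f.1) h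
      simp only [φ, canon_mk (hdeg q.2), canon_mk (hdeg q'.2)] at h'
      exact Subtype.ext (mul_left_cancel₀ (pow_ne_zero _ X_ne_zero) h')
    · obtain ⟨q, hq⟩ := (mem_annRootPow_iff hk).1 f.2
      have hqk : q.degree < k := by
        rw [← degree_X_pow_mul_lt_iff (m := c - k), Nat.sub_add_cancel hk, ← hq]
        exact degree_canon_lt f.1
      exact ⟨⟨q, mem_degreeLT.2 hqk⟩, Subtype.ext (by simp only [φ, ← hq, mk_canon])⟩
  rw [← Nat.card_congr (Equiv.ofBijective φ hφ),
    Nat.card_congr (degreeLTEquiv (ZMod p) k).toEquiv, Nat.card_fun, Nat.card_zmod, Nat.card_fin]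

theorem mul_eq_zero_of_mem_annRootPow {k : ℕ} (hk : 2 * k ≤ c) {f g : TPR p c}
    (hf : f ∈ annRootPow p c k) (hg : g ∈ annRootPow p c k) : f * g = 0 := by
  rcases eq_or_ne f 0 with rfl | hf0
  · exact zero_mul g
  rcases eq_or_ne g 0 with rfl | hg0
  · exact mul_zero f
  rw [mem_annRootPow_iff_le_mindeg hf0 (by omega)] at hf
  rw [mem_annRootPow_iff_le_mindeg hg0 (by omega)] at hg
  exact (mul_eq_zero_iff_le_mindeg_add hf0 hg0).2 (by omega)

theorem mul_ne_zero_of_notMem_annRootPow {k : ℕ} (hk : k ≤ c) (hc : c ≤ 2 * k + 1)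
    {f g : TPR p c} (hf : f ∉ annRootPow p c k) (hg : g ∉ annRootPow p c k) : f * g ≠ 0 := by
  have hf0 : f ≠ 0 := by rintro rfl; exact hf (zero_mul _)
  have hg0 : g ≠ 0 := by rintro rfl; exact hg (zero_mul _)
  rw [mem_annRootPow_iff_le_mindeg hf0 hk] at hf
  rw [mem_annRootPow_iff_le_mindeg hg0 hk] at hg
  rw [Ne, mul_eq_zero_iff_le_mindeg_add hf0 hg0]
  omega

theorem root_pow_mem_zd {k : ℕ} (hk₀ : 0 < k) (hk : k < c) :
    AdjoinRoot.root (X ^ c : (ZMod p)[X]) ^ k ∈ zd p c := by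
  refine ⟨root_pow_ne_zero hk, _ ^ (c - k), root_pow_ne_zero (by omega), ?_⟩
  rw [← pow_add, Nat.add_sub_cancel' hk.le, root_pow_eq_mk, AdjoinRoot.mk_self]

theorem mem_zd_of_mem_annRootPow {k : ℕ} (hk : k < c) {f : TPR p c} (hf : f ∈ annRootPow p c k)
    (hf₀ : f ≠ 0) : f ∈ zd p c :=
  ⟨hf₀, _, root_pow_ne_zero hk, hf⟩

theorem root_pow_notMem_annRootPow {k : ℕ} (hk : 2 * k < c) :
    AdjoinRoot.root (X ^ c : (ZMod p)[X]) ^ k ∉ annRootPow p c k := by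
  change ¬ _ * _ = 0
  rw [← pow_add]
  exact root_pow_ne_zero (by omega)

end TPR

namespace zdGraph

open TPR

variable {p b : ℕ} [Fact p.Prime]

theorem card_le_of_isClique {s : Finset (zd p (2 * b + 1))}
    (hs : (zdGraph p (2 * b + 1)).IsClique (s : Set (zd p (2 * b + 1)))) : s.card ≤ p ^ b := by
  classical
  -- A clique has at most one vertex outside the annihilator; `Φ` sends it to `0`, not a vertex.
  let Φ : s → annRootPow p (2 * b + 1) b := fun v =>
    if h : (v : TPR p (2 * b + 1)) ∈ annRootPow p (2 * b + 1) b then ⟨v, h⟩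
    else ⟨0, zero_mul _⟩
  have hΦ : Function.Injective Φ := by
    intro v w hvw
    by_contra hne
    have hadj : (zdGraph p (2 * b + 1)).Adj v w := hs v.2 w.2 fun h => hne (Subtype.ext h)
    have hval := congrArg Subtype.val hvw
    simp only [Φ] at hval
    split_ifs at hval with hv hw hw
    · exact hadj.1 (Subtype.ext hval)
    · exact v.1.2.1 hval
    · exact w.1.2.1 hval.symm
    · exact mul_ne_zero_of_notMem_annRootPow (by omega) (by omega) hv hw hadj.2
  calc s.card = Nat.card s := (Nat.card_eq_finsetCard s).symm
    _ ≤ Nat.card (annRootPow p (2 * b + 1) b) := Nat.card_le_card_of_injective Φ hΦ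
    _ = p ^ b := card_annRootPow (by omega)

/-- `x ^ b` takes the place of `0` in the annihilator of `x ^ b`. -/
def annVertex (hb : 1 ≤ b) (f : annRootPow p (2 * b + 1) b) : zd p (2 * b + 1) :=
  if hf : (f : TPR p (2 * b + 1)) = 0 then ⟨_, root_pow_mem_zd hb (by omega)⟩
  else ⟨f, mem_zd_of_mem_annRootPow (by omega) f.2 hf⟩

theorem pairwise_adj_annVertex (hb : 1 ≤ b) :
    Pairwise fun f g => (zdGraph p (2 * b + 1)).Adj (annVertex hb f) (annVertex hb g) := by
  intro f g hfg
  have hx := root_pow_notMem_annRootPow (p := p) (by omega : 2 * b < 2 * b + 1)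
  unfold annVertex
  split_ifs with hf hg hg
  · exact absurd (Subtype.ext (hf.trans hg.symm)) hfg
  · exact ⟨fun h => hx (Subtype.mk.inj h ▸ g.2), (mul_comm _ _).trans g.2⟩
  · exact ⟨fun h => hx (Subtype.mk.inj h ▸ f.2), f.2⟩
  · exact ⟨fun h => hfg (Subtype.ext (Subtype.mk.inj h)),
      mul_eq_zero_of_mem_annRootPow (by omega) f.2 g.2⟩

end zdGraph

/-- The clique number of the zero-divisor graph of `𝔽_p[x]/(x^(2b+1))` equals `p^b`. -/
theorem stmt_11 (p b : ℕ) [Fact p.Prime] (hb : 1 ≤ b) :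
    (zdGraph p (2 * b + 1)).cliqueNum = p ^ b := by
  refine le_antisymm ?_ ?_
  · obtain ⟨s, hs⟩ := (zdGraph p (2 * b + 1)).exists_isNClique_cliqueNum
    exact hs.card_eq ▸ zdGraph.card_le_of_isClique hs.isClique
  · rw [← TPR.card_annRootPow (by omega : b ≤ 2 * b + 1)]
    exact SimpleGraph.card_le_cliqueNum_of_pairwise_adj (zdGraph.pairwise_adj_annVertex hb)
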